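/- For a partition λ of n with first part λ₁, every quasi-Yamanouchi tableau of shape λ in QYT_{≤n}(λ) equals its own destandardization, and the sets QYT_{=m}(λ) for ℓ(λ) ≤ m ≤ n−(λ₁−1) partition QYT_{≤n}(λ); consequently SYT(λ) = Σ_{m=ℓ(λ)}^{n−(λ₁−1)} QYT_{=m}(λ). -/

import Mathlib

open YoungDiagram

/-- Entries of `T` are all `< m`.  Entries are 0-based: the value `v` represents the
positive integer `v + 1`, so this says all (1-based) entries are at most `m`. -/
def EntryLE (μ : YoungDiagram) (T : SemistandardYoungTableau μ) (m : ℕ) : Prop :=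
  ∀ i j : ℕ, (i, j) ∈ μ → T i j < m

/-- `T` is quasi-Yamanouchi: whenever a value `v > 0` appears, the leftmost
occurrence of `v` is weakly left of some occurrence of `v - 1`; equivalently some
occurrence of `v` is weakly left of some occurrence of `v - 1`. -/
def IsQY (μ : YoungDiagram) (T : SemistandardYoungTableau μ) : Prop :=
  ∀ v : ℕ, 0 < v → (∃ i j : ℕ, (i, j) ∈ μ ∧ T i j = v) →
    ∃ i j i' j' : ℕ, (i, j) ∈ μ ∧ (i', j') ∈ μ ∧ T i j = v ∧ T i' j' = v - 1 ∧ j ≤ j'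

/-- The maximum (1-based) entry of `T` is exactly `m`: all entries are `< m`
(0-based) and the value `m - 1` appears. -/
def MaxEq (μ : YoungDiagram) (T : SemistandardYoungTableau μ) (m : ℕ) : Prop :=
  EntryLE μ T m ∧ ∃ i j : ℕ, (i, j) ∈ μ ∧ T i j = m - 1

/-- The number of quasi-Yamanouchi tableaux of shape `μ` with maximum entry exactly `m`. -/
noncomputable def QYTeq (μ : YoungDiagram) (m : ℕ) : ℕ :=
  Nat.card {T : SemistandardYoungTableau μ // IsQY μ T ∧ MaxEq μ T m}

/-- The number of semistandard Young tableaux of shape `μ` with entries at most `m`. -/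
noncomputable def SSYTle (μ : YoungDiagram) (m : ℕ) : ℕ :=
  Nat.card {T : SemistandardYoungTableau μ // EntryLE μ T m}

/-- `T` is a standard Young tableau: each of the values `0, …, μ.card - 1`
(representing `1, …, n`) appears exactly once. -/
def IsSYT (μ : YoungDiagram) (T : SemistandardYoungTableau μ) : Prop :=
  ∀ v : ℕ, v < μ.card → ∃! p : ℕ × ℕ, p ∈ μ ∧ T p.1 p.2 = v

/-- The number of standard Young tableaux of shape `μ`. -/
noncomputable def SYTcount (μ : YoungDiagram) : ℕ :=
  Nat.card {T : SemistandardYoungTableau μ // IsSYT μ T}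

/-- The descent set of a standard tableau, in the paper's 1-based labelling:
`d ∈ Des T` iff `1 ≤ d ≤ n - 1` and the (1-based) entry `d + 1` (0-based value `d`)
appears weakly left of the (1-based) entry `d` (0-based value `d - 1`). -/
def Des (μ : YoungDiagram) (T : SemistandardYoungTableau μ) : Set ℕ :=
  {d | 1 ≤ d ∧ d ≤ μ.card - 1 ∧
    ∃ i j i' j' : ℕ, (i, j) ∈ μ ∧ (i', j') ∈ μ ∧ T i j = d ∧ T i' j' = d - 1 ∧ j ≤ j'}

/-- One destandardization step at value `v`: every occurrence of `v` lies strictly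
right of every occurrence of `v - 1` (in particular vacuously if no `v - 1` appears),
and `T'` is obtained from `T` by decrementing every entry equal to `v` to `v - 1`. -/
def StepAt (μ : YoungDiagram) (T T' : SemistandardYoungTableau μ) (v : ℕ) : Prop :=
  0 < v ∧ (∃ i j : ℕ, (i, j) ∈ μ ∧ T i j = v) ∧
    (∀ i j i' j' : ℕ, (i, j) ∈ μ → (i', j') ∈ μ → T i j = v → T i' j' = v - 1 → j' < j) ∧
    (∀ i j : ℕ, (i, j) ∈ μ → T' i j = if T i j = v then v - 1 else T i j)

/-- One destandardization step (at some value). -/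
def Step (μ : YoungDiagram) (T T' : SemistandardYoungTableau μ) : Prop :=
  ∃ v : ℕ, StepAt μ T T' v

/-- `Q` is the destandardization of `T`: it is reachable from `T` by destandardization
steps and no further step applies to it. -/
def IsDst (μ : YoungDiagram) (T Q : SemistandardYoungTableau μ) : Prop :=
  Relation.ReflTransGen (Step μ) T Q ∧ ∀ Q' : SemistandardYoungTableau μ, ¬ Step μ Q Q'

/-- The hook length of the box in row `i`, column `j` of `μ`. -/
def hookLength (μ : YoungDiagram) (i j : ℕ) : ℕ :=
  (μ.rowLen i - j) + (μ.colLen j - i) - 1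

/-- The hook-content product `∏_{u ∈ μ} (k + c(u)) / h(u)` where `c(u)` is the
content (column minus row) and `h(u)` the hook length. -/
noncomputable def hookContent (μ : YoungDiagram) (k : ℕ) : ℚ :=
  ∏ c ∈ μ.cells, ((k : ℚ) + (c.2 : ℚ) - (c.1 : ℚ)) / (hookLength μ c.1 c.2 : ℚ)

/-- `μ` is the partition `(l1, l2, 2^{h2-2}, 1^{h1-h2})`: first row `l1`, second row
`l2`, rows `2, …, h2 - 1` of length `2`, rows `h2, …, h1 - 1` of length `1`, and no
other rows; so the first column has height `h1` and the second column height `h2`. -/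
def HasRows2 (μ : YoungDiagram) (l1 l2 h1 h2 : ℕ) : Prop :=
  μ.rowLen 0 = l1 ∧ μ.rowLen 1 = l2 ∧
    (∀ i : ℕ, 2 ≤ i → i < h2 → μ.rowLen i = 2) ∧
    (∀ i : ℕ, h2 ≤ i → i < h1 → μ.rowLen i = 1) ∧
    (∀ i : ℕ, h1 ≤ i → μ.rowLen i = 0)

/-!
Standardization `std` and destandardization `dst` (an entry `v` of a standard tableau becomes
the number of descents in `[1, v]`) are inverse bijections between standard tableaux and
quasi-Yamanouchi tableaux with entries at most `n`: two cells that are consecutive in the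
reading order of a quasi-Yamanouchi tableau form a descent of its standardization exactly when
the value goes up, and then it goes up by one. The maximum `m` of a quasi-Yamanouchi tableau
satisfies `ℓ(λ) ≤ m` by column strictness and `m + λ₁ - 1 ≤ n` by a count of cells, so sorting
by maximum turns `SYT(λ) = QYT_{≤n}(λ)` into the sum.
-/

open Finset

theorem YoungDiagram.zero_zero_mem_of_card_pos {μ : YoungDiagram} (hμ : 0 < μ.card) :
    ((0, 0) : ℕ × ℕ) ∈ μ := by
  obtain ⟨p, hp⟩ := card_pos.1 hμ
  exact μ.up_left_mem (Nat.zero_le _) (Nat.zero_le _) ((μ.mem_cells _).1 hp)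

namespace SemistandardYoungTableau

variable {μ : YoungDiagram}

theorem ext_of_eqOn {T T' : SemistandardYoungTableau μ}
    (h : ∀ i j, (i, j) ∈ μ → T i j = T' i j) : T = T' :=
  ext fun i j => if hij : (i, j) ∈ μ then h i j hij else by rw [T.zeros hij, T'.zeros hij]

theorem row_le_apply (T : SemistandardYoungTableau μ) {i j : ℕ} (h : (i, j) ∈ μ) :
    i ≤ T i j := by
  induction i with
  | zero => exact Nat.zero_le _
  | succ i ih =>
    exact (ih (μ.up_left_mem i.le_succ le_rfl h)).trans_lt (T.col_strict i.lt_succ_self h)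

theorem finite_entryLE (m : ℕ) : Finite {T : SemistandardYoungTableau μ // EntryLE μ T m} :=
  Finite.of_injective
    (fun T (p : μ.cells) => (⟨T.1 p.1.1 p.1.2, T.2 _ _ ((μ.mem_cells _).1 p.2)⟩ : Fin m))
    fun _ _ h => Subtype.ext <| ext_of_eqOn fun i j hij =>
      congrArg Fin.val (congrFun h ⟨(i, j), (μ.mem_cells _).2 hij⟩)

/-- Standardization numbers the cells by increasing value, cells of equal value from left to
right; `key` is the sort key of this reading order. -/
def key (T : SemistandardYoungTableau μ) (p : ℕ × ℕ) : ℕ ×ₗ ℕ := toLex (T p.1 p.2, p.2)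

variable {T : SemistandardYoungTableau μ} {p q c : ℕ × ℕ}

theorem key_lt_key_iff :
    key T p < key T q ↔ T p.1 p.2 < T q.1 q.2 ∨ T p.1 p.2 = T q.1 q.2 ∧ p.2 < q.2 :=
  Prod.Lex.toLex_lt_toLex

theorem key_le_key_iff :
    key T p ≤ key T q ↔ T p.1 p.2 < T q.1 q.2 ∨ T p.1 p.2 = T q.1 q.2 ∧ p.2 ≤ q.2 :=
  Prod.Lex.toLex_le_toLex

theorem apply_le_apply_of_key_le (h : key T p ≤ key T q) : T p.1 p.2 ≤ T q.1 q.2 := by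
  rcases key_le_key_iff.1 h with h | ⟨h, -⟩ <;> omega

theorem col_le_col_of_key_le (h : key T p ≤ key T q) (hv : T p.1 p.2 = T q.1 q.2) :
    p.2 ≤ q.2 := by
  rcases key_le_key_iff.1 h with h | ⟨-, h⟩ <;> omega

theorem eq_of_key_eq (hp : p ∈ μ) (hq : q ∈ μ) (h : key T p = key T q) : p = q := by
  obtain ⟨hval, hcol⟩ := Prod.ext_iff.1 (toLex.injective h)
  obtain ⟨i, j⟩ := p
  obtain ⟨i', j'⟩ := q
  dsimp only at hval hcol
  subst hcol
  rcases lt_trichotomy i i' with hi | rfl | hi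
  · exact absurd hval (T.col_strict hi hq).ne
  · rfl
  · exact absurd hval (T.col_strict hi hp).ne'

def rank (T : SemistandardYoungTableau μ) (p : ℕ × ℕ) : ℕ :=
  #{q ∈ μ.cells | key T q < key T p}

theorem rank_le_rank (h : key T p ≤ key T q) : rank T p ≤ rank T q :=
  card_le_card (monotone_filter_right _ fun _ _ hc => hc.trans_le h)

theorem rank_lt_rank (hp : p ∈ μ) (h : key T p < key T q) : rank T p < rank T q :=
  card_lt_card <| (ssubset_iff_of_subset (monotone_filter_right _ fun _ _ hc => hc.trans h)).2
    ⟨p, by simp [hp, h], by simp⟩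

theorem rank_lt_rank_iff (hp : p ∈ μ) : rank T p < rank T q ↔ key T p < key T q :=
  ⟨fun h => lt_of_not_ge fun h' => h.not_ge (rank_le_rank h'), rank_lt_rank hp⟩

theorem rank_le_rank_iff (hq : q ∈ μ) : rank T p ≤ rank T q ↔ key T p ≤ key T q := by
  simpa only [not_lt] using (rank_lt_rank_iff hq).not

theorem eq_of_rank_eq (hp : p ∈ μ) (hq : q ∈ μ) (h : rank T p = rank T q) : p = q :=
  eq_of_key_eq hp hq <|
    le_antisymm ((rank_le_rank_iff hq).1 h.le) ((rank_le_rank_iff hp).1 h.ge)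

theorem rank_lt_card (hp : p ∈ μ) : rank T p < μ.card :=
  card_lt_card <| (ssubset_iff_of_subset (filter_subset _ _)).2 ⟨p, by simpa using hp, by simp⟩

theorem image_rank : μ.cells.image (rank T) = range μ.card :=
  eq_of_subset_of_card_le
    (fun _ hv => by
      obtain ⟨p, hp, rfl⟩ := mem_image.1 hv
      exact mem_range.2 (rank_lt_card ((μ.mem_cells _).1 hp)))
    (by
      rw [card_range, card_image_of_injOn fun p hp q hq =>
        eq_of_rank_eq ((μ.mem_cells _).1 hp) ((μ.mem_cells _).1 hq)])

theorem exists_rank_eq {v : ℕ} (hv : v < μ.card) : ∃ p ∈ μ, rank T p = v := by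
  obtain ⟨p, hp, rfl⟩ := mem_image.1 (image_rank (T := T) ▸ mem_range.2 hv)
  exact ⟨p, (μ.mem_cells _).1 hp, rfl⟩

theorem key_lt_key_iff_of_rank_eq_succ (hq : q ∈ μ) (hc : c ∈ μ)
    (h : rank T p = rank T q + 1) : key T c < key T p ↔ key T c ≤ key T q := by
  rw [← rank_lt_rank_iff hc, ← rank_le_rank_iff hq, h, Nat.lt_succ_iff]

def std (T : SemistandardYoungTableau μ) : SemistandardYoungTableau μ where
  entry i j := if (i, j) ∈ μ then rank T (i, j) else 0
  row_weak' {i j₁ j₂} hj h := by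
    rw [if_pos (μ.up_left_mem le_rfl hj.le h), if_pos h]
    exact rank_le_rank (key_le_key_iff.2 ((T.row_weak hj h).lt_or_eq.imp_right (⟨·, hj.le⟩)))
  col_strict' {i₁ i₂ j} hi h := by
    rw [if_pos (μ.up_left_mem hi.le le_rfl h), if_pos h]
    exact rank_lt_rank (μ.up_left_mem hi.le le_rfl h) (key_lt_key_iff.2 (.inl (T.col_strict hi h)))
  zeros' h := if_neg h

theorem std_apply (T : SemistandardYoungTableau μ) {p : ℕ × ℕ} (hp : p ∈ μ) :
    std T p.1 p.2 = rank T p :=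
  if_pos hp

theorem isSYT_std (T : SemistandardYoungTableau μ) : IsSYT μ (std T) := by
  intro v hv
  obtain ⟨p, hp, rfl⟩ := exists_rank_eq (T := T) hv
  exact ⟨p, ⟨hp, std_apply T hp⟩,
    fun q ⟨hq, h⟩ => eq_of_rank_eq hq hp (std_apply T hq ▸ h)⟩

open Classical in
noncomputable def desCount (T : SemistandardYoungTableau μ) (v : ℕ) : ℕ :=
  #{d ∈ Icc 1 v | d ∈ Des μ T}

@[simp]
theorem desCount_zero : desCount T 0 = 0 := by
  simp [desCount]

open Classical in
theorem desCount_succ (v : ℕ) :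
    desCount T (v + 1) = desCount T v + if v + 1 ∈ Des μ T then 1 else 0 := by
  rw [desCount, desCount, ← Ico_insert_right (Nat.le_add_left 1 v),
    Ico_add_one_right_eq_Icc, filter_insert]
  split_ifs with h
  · exact card_insert_of_notMem (by simp)
  · rfl

theorem desCount_mono : Monotone (desCount T) := fun _ _ h => by
  classical
  exact card_le_card (filter_subset_filter _ (Icc_subset_Icc le_rfl h))

theorem desCount_le (v : ℕ) : desCount T v ≤ v := by
  classical
  exact (card_filter_le _ _).trans (by simp)

theorem exists_desCount_jump {v x : ℕ} (hv : 0 < v) (hx : desCount T x = v) :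
    ∃ w, w + 1 ∈ Des μ T ∧ desCount T (w + 1) = v ∧ desCount T w = v - 1 := by
  induction x with
  | zero => simp at hx; omega
  | succ x ih =>
    classical
    rw [desCount_succ] at hx
    by_cases hdes : x + 1 ∈ Des μ T
    · by_cases hx' : desCount T x = v
      · exact ih hx'
      · rw [if_pos hdes] at hx
        exact ⟨x, hdes, by rw [desCount_succ, if_pos hdes]; omega, by omega⟩
    · rw [if_neg hdes] at hx
      exact ih (by omega)

end SemistandardYoungTableau

namespace IsSYT

open SemistandardYoungTableau

variable {μ : YoungDiagram} {T : SemistandardYoungTableau μ} {p q : ℕ × ℕ}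

/-- The values `0, …, n - 1` fill `n` distinct cells, which must then be all the cells. -/
theorem apply_lt_card (hT : IsSYT μ T) (hp : p ∈ μ) : T p.1 p.2 < μ.card := by
  classical
  have hsurj : Set.SurjOn (fun q : ℕ × ℕ => T q.1 q.2)
      ({q ∈ μ.cells | T q.1 q.2 < μ.card} : Finset (ℕ × ℕ)) (range μ.card) := by
    intro v hv
    obtain ⟨q, ⟨hq, rfl⟩, -⟩ := hT v (mem_range.1 hv)
    exact ⟨q, by simpa [hq] using hv, rfl⟩
  have hall : {q ∈ μ.cells | T q.1 q.2 < μ.card} = μ.cells :=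
    eq_of_subset_of_card_le (filter_subset _ _)
      ((card_range _).symm.le.trans (card_le_card_of_surjOn _ hsurj))
  have hp' : p ∈ {q ∈ μ.cells | T q.1 q.2 < μ.card} := by
    rw [hall]
    exact (μ.mem_cells _).2 hp
  exact (mem_filter.1 hp').2

theorem eq_of_apply_eq (hT : IsSYT μ T) (hp : p ∈ μ) (hq : q ∈ μ)
    (h : T p.1 p.2 = T q.1 q.2) : p = q :=
  (hT _ (hT.apply_lt_card hp)).unique ⟨hp, rfl⟩ ⟨hq, h.symm⟩

theorem exists_apply_eq (hT : IsSYT μ T) {v : ℕ} (hv : v < μ.card) :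
    ∃ p ∈ μ, T p.1 p.2 = v :=
  (hT v hv).exists.imp fun _ h => ⟨h.1, h.2⟩

theorem card_filter_apply_lt (hT : IsSYT μ T) {v : ℕ} (hv : v ≤ μ.card) :
    #{q ∈ μ.cells | T q.1 q.2 < v} = v := by
  have himage : {q ∈ μ.cells | T q.1 q.2 < v}.image (fun q => T q.1 q.2) = range v := by
    ext w
    simp only [mem_image, mem_filter, mem_range, YoungDiagram.mem_cells]
    constructor
    · rintro ⟨q, ⟨-, hq⟩, rfl⟩
      exact hq
    · intro hw
      obtain ⟨q, hq, hqw⟩ := hT.exists_apply_eq (hw.trans_le hv)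
      exact ⟨q, ⟨hq, hqw ▸ hw⟩, hqw⟩
  rw [← card_image_of_injOn fun q hq q' hq' => hT.eq_of_apply_eq
    ((μ.mem_cells _).1 (mem_filter.1 hq).1) ((μ.mem_cells _).1 (mem_filter.1 hq').1), himage,
    card_range]

theorem col_lt_of_desCount_succ_eq (hT : IsSYT μ T) (hp : p ∈ μ) (hq : q ∈ μ)
    (hpq : T q.1 q.2 = T p.1 p.2 + 1) (h : desCount T (T q.1 q.2) = desCount T (T p.1 p.2)) :
    p.2 < q.2 := by
  classical
  have hdes : T q.1 q.2 ∉ Des μ T := fun hdes => by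
    rw [hpq, desCount_succ, ← hpq, if_pos hdes] at h
    omega
  by_contra! hcol
  exact hdes ⟨by omega, by have := hT.apply_lt_card hq; omega,
    q.1, q.2, p.1, p.2, hq, hp, rfl, by omega, hcol⟩

theorem col_lt_of_desCount_eq (hT : IsSYT μ T) (hp : p ∈ μ) (hq : q ∈ μ)
    (hlt : T p.1 p.2 < T q.1 q.2) (h : desCount T (T q.1 q.2) = desCount T (T p.1 p.2)) :
    p.2 < q.2 := by
  obtain ⟨k, hk⟩ : ∃ k, T q.1 q.2 = T p.1 p.2 + k + 1 :=
    ⟨T q.1 q.2 - T p.1 p.2 - 1, by omega⟩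
  induction k generalizing q with
  | zero => exact hT.col_lt_of_desCount_succ_eq hp hq hk h
  | succ k ih =>
    obtain ⟨r, hr, hrv⟩ := hT.exists_apply_eq (v := T p.1 p.2 + k + 1)
      (by have := hT.apply_lt_card hq; omega)
    have hpr := desCount_mono (T := T) (show T p.1 p.2 ≤ T r.1 r.2 by omega)
    have hrq := desCount_mono (T := T) (show T r.1 r.2 ≤ T q.1 q.2 by omega)
    exact (ih hr (by omega) (by omega) hrv).trans
      (hT.col_lt_of_desCount_succ_eq hr hq (by omega) (by omega))

end IsSYT

namespace SemistandardYoungTableau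

variable {μ : YoungDiagram} {T : SemistandardYoungTableau μ}

noncomputable def dst (T : SemistandardYoungTableau μ) (hT : IsSYT μ T) :
    SemistandardYoungTableau μ where
  entry i j := if (i, j) ∈ μ then desCount T (T i j) else 0
  row_weak' {i j₁ j₂} hj h := by
    rw [if_pos (μ.up_left_mem le_rfl hj.le h), if_pos h]
    exact desCount_mono (T.row_weak hj h)
  col_strict' {i₁ i₂ j} hi h := by
    have h₁ := μ.up_left_mem hi.le le_rfl h
    rw [if_pos h₁, if_pos h]
    refine (desCount_mono (T.col_strict hi h).le).lt_of_ne fun heq => ?_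
    exact (hT.col_lt_of_desCount_eq h₁ h (T.col_strict hi h) heq.symm).false
  zeros' h := if_neg h

theorem dst_apply (hT : IsSYT μ T) {p : ℕ × ℕ} (hp : p ∈ μ) :
    dst T hT p.1 p.2 = desCount T (T p.1 p.2) :=
  if_pos hp

theorem entryLE_dst (hT : IsSYT μ T) : EntryLE μ (dst T hT) μ.card := fun _ _ hij =>
  (dst_apply hT hij).trans_lt ((desCount_le _).trans_lt (hT.apply_lt_card hij))

theorem isQY_dst (hT : IsSYT μ T) : IsQY μ (dst T hT) := by
  rintro v hv ⟨i, j, hij, hval⟩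
  rw [dst_apply hT hij] at hval
  obtain ⟨w, ⟨-, -, a, b, a', b', ha, ha', hTa, hTa', hcol⟩, hw, hw'⟩ :=
    exists_desCount_jump hv hval
  refine ⟨a, b, a', b', ha, ha', ?_, ?_, hcol⟩
  · rw [dst_apply hT ha, hTa, hw]
  · rw [dst_apply hT ha', hTa', Nat.add_sub_cancel, hw']

theorem key_dst_lt_key_dst (hT : IsSYT μ T) {p q : ℕ × ℕ} (hp : p ∈ μ) (hq : q ∈ μ)
    (hlt : T p.1 p.2 < T q.1 q.2) : key (dst T hT) p < key (dst T hT) q := by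
  rw [key_lt_key_iff, dst_apply hT hp, dst_apply hT hq]
  refine (desCount_mono hlt.le).lt_or_eq.imp_right fun heq => ⟨heq, ?_⟩
  exact hT.col_lt_of_desCount_eq hp hq hlt heq.symm

theorem key_dst_lt_key_dst_iff (hT : IsSYT μ T) {p q : ℕ × ℕ} (hp : p ∈ μ) (hq : q ∈ μ) :
    key (dst T hT) p < key (dst T hT) q ↔ T p.1 p.2 < T q.1 q.2 := by
  refine ⟨fun h => ?_, key_dst_lt_key_dst hT hp hq⟩
  rcases lt_trichotomy (T p.1 p.2) (T q.1 q.2) with hlt | heq | hgt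
  · exact hlt
  · exact absurd h (hT.eq_of_apply_eq hp hq heq ▸ lt_irrefl _)
  · exact absurd h (key_dst_lt_key_dst hT hq hp hgt).asymm

theorem std_dst (hT : IsSYT μ T) : std (dst T hT) = T := by
  refine ext_of_eqOn fun i j hij => ?_
  rw [std_apply _ hij, rank, ← hT.card_filter_apply_lt (hT.apply_lt_card hij).le]
  exact congrArg card (filter_congr fun q hq =>
    key_dst_lt_key_dst_iff hT ((μ.mem_cells _).1 hq) hij)

def maxEntry (T : SemistandardYoungTableau μ) : ℕ := μ.cells.sup fun p => T p.1 p.2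

theorem apply_le_maxEntry (T : SemistandardYoungTableau μ) {p : ℕ × ℕ} (hp : p ∈ μ) :
    T p.1 p.2 ≤ maxEntry T :=
  le_sup (f := fun p : ℕ × ℕ => T p.1 p.2) ((μ.mem_cells _).2 hp)

theorem exists_apply_eq_maxEntry (T : SemistandardYoungTableau μ) (hμ : 0 < μ.card) :
    ∃ p ∈ μ, T p.1 p.2 = maxEntry T := by
  obtain ⟨p, hp, h⟩ := exists_mem_eq_sup _ (card_pos.1 hμ) fun p : ℕ × ℕ => T p.1 p.2
  exact ⟨p, (μ.mem_cells _).1 hp, h.symm⟩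

theorem maxEq_iff (T : SemistandardYoungTableau μ) (hμ : 0 < μ.card) {m : ℕ} :
    MaxEq μ T m ↔ m = maxEntry T + 1 := by
  obtain ⟨p, hp, hpmax⟩ := exists_apply_eq_maxEntry T hμ
  constructor
  · rintro ⟨hlt, i, j, hij, hval⟩
    have := hlt p.1 p.2 hp
    have : T i j ≤ maxEntry T := apply_le_maxEntry T (p := (i, j)) hij
    omega
  · rintro rfl
    exact ⟨fun i j hij => Nat.lt_succ_of_le (apply_le_maxEntry T (p := (i, j)) hij),
      p.1, p.2, hp, hpmax⟩

theorem colLen_zero_le_maxEntry_succ (T : SemistandardYoungTableau μ) (hμ : 0 < μ.card) :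
    μ.colLen 0 ≤ maxEntry T + 1 := by
  have hpos : 0 < μ.colLen 0 := μ.mem_iff_lt_colLen.1 (μ.zero_zero_mem_of_card_pos hμ)
  have hbottom : (μ.colLen 0 - 1, 0) ∈ μ := μ.mem_iff_lt_colLen.2 (by omega)
  have := (T.row_le_apply hbottom).trans (apply_le_maxEntry T hbottom)
  omega

end SemistandardYoungTableau

namespace IsQY

open SemistandardYoungTableau

variable {μ : YoungDiagram} {Q : SemistandardYoungTableau μ} {p q : ℕ × ℕ}

theorem not_step (hQ : IsQY μ Q) (Q' : SemistandardYoungTableau μ) : ¬ Step μ Q Q' := by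
  rintro ⟨v, hv, happ, hsep, -⟩
  obtain ⟨i, j, i', j', hij, hij', hval, hval', hcol⟩ := hQ v hv happ
  exact (hsep i j i' j' hij hij' hval hval').not_ge hcol

theorem exists_apply_eq_of_le (hQ : IsQY μ Q) {v w : ℕ} (hvw : v ≤ w)
    (hw : ∃ p ∈ μ, Q p.1 p.2 = w) : ∃ p ∈ μ, Q p.1 p.2 = v := by
  induction w, hvw using Nat.le_induction with
  | base => exact hw
  | succ w _ ih =>
    obtain ⟨p, hp, hpw⟩ := hw
    obtain ⟨-, -, i', j', -, hij', -, hval', -⟩ := hQ (w + 1) w.succ_pos ⟨p.1, p.2, hp, hpw⟩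
    exact ih ⟨(i', j'), hij', hval'⟩

theorem apply_le_succ_of_rank_eq_succ (hQ : IsQY μ Q) (hp : p ∈ μ) (hq : q ∈ μ)
    (h : rank Q p = rank Q q + 1) : Q p.1 p.2 ≤ Q q.1 q.2 + 1 := by
  by_contra! hgt
  obtain ⟨c, hc, hcv⟩ := hQ.exists_apply_eq_of_le hgt.le ⟨p, hp, rfl⟩
  have hcp : key Q c < key Q p := key_lt_key_iff.2 (.inl (by omega))
  have hqc : key Q q < key Q c := key_lt_key_iff.2 (.inl (by omega))
  exact ((key_lt_key_iff_of_rank_eq_succ hq hc h).1 hcp).not_gt hqc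

/-- `p` and `q` are consecutive in the reading order, so `p` is the leftmost cell of its value
and `q` the rightmost of its; the quasi-Yamanouchi condition compares exactly those two. -/
theorem mem_Des_std_iff (hQ : IsQY μ Q) (hp : p ∈ μ) (hq : q ∈ μ)
    (h : rank Q p = rank Q q + 1) : rank Q p ∈ Des μ (std Q) ↔ Q p.1 p.2 = Q q.1 q.2 + 1 := by
  have hqp : key Q q < key Q p := (key_lt_key_iff_of_rank_eq_succ hq hq h).2 le_rfl
  constructor
  · rintro ⟨-, -, i, j, i', j', hij, hij', hval, hval', hcol⟩
    rw [std_apply Q (p := (i, j)) hij] at hval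
    rw [std_apply Q (p := (i', j')) hij', h, Nat.add_sub_cancel] at hval'
    obtain rfl := eq_of_rank_eq hij hp hval
    obtain rfl := eq_of_rank_eq hij' hq hval'
    have := hQ.apply_le_succ_of_rank_eq_succ hp hq h
    rcases key_lt_key_iff.1 hqp with hlt | ⟨-, hlt⟩
    · omega
    · exact absurd hcol hlt.not_ge
  · intro hpq
    obtain ⟨i, j, i', j', hij, hij', hval, hval', hcol⟩ :=
      hQ _ (by omega) ⟨p.1, p.2, hp, rfl⟩
    have hpa : p.2 ≤ j := by
      refine col_le_col_of_key_le (T := Q) (q := (i, j)) (not_lt.1 fun hlt => ?_) hval.symm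
      have : Q i j ≤ Q q.1 q.2 :=
        apply_le_apply_of_key_le ((key_lt_key_iff_of_rank_eq_succ hq hij h).1 hlt)
      omega
    have hbq : j' ≤ q.2 := by
      refine col_le_col_of_key_le (T := Q) (p := (i', j')) ?_ (show Q i' j' = _ by omega)
      exact (key_lt_key_iff_of_rank_eq_succ hq hij' h).1
        (key_lt_key_iff.2 (.inl (show Q i' j' < _ by omega)))
    refine ⟨by omega, by have := rank_lt_card (T := Q) hp; omega,
      p.1, p.2, q.1, q.2, hp, hq, std_apply Q hp, ?_, by omega⟩
    rw [std_apply Q hq, h, Nat.add_sub_cancel]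

theorem desCount_std_rank (hQ : IsQY μ Q) (hp : p ∈ μ) :
    desCount (std Q) (rank Q p) = Q p.1 p.2 := by
  classical
  induction hd : rank Q p generalizing p with
  | zero =>
    rw [desCount_zero, eq_comm, ← Nat.le_zero]
    by_contra! hpos
    obtain ⟨c, hc, hcv⟩ := hQ.exists_apply_eq_of_le (Nat.sub_le (Q p.1 p.2) 1) ⟨p, hp, rfl⟩
    have := rank_lt_rank (T := Q) (q := p) hc (key_lt_key_iff.2 (.inl (by omega)))
    omega
  | succ d ih =>
    have hd_lt : d < μ.card := by
      have := rank_lt_card (T := Q) hp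
      omega
    obtain ⟨q, hq, rfl⟩ := exists_rank_eq (T := Q) hd_lt
    have hqp : key Q q < key Q p := (key_lt_key_iff_of_rank_eq_succ hq hq hd).2 le_rfl
    have hle := apply_le_apply_of_key_le hqp.le
    have hdes := hQ.mem_Des_std_iff hp hq hd
    rw [hd] at hdes
    rw [desCount_succ, ih hq rfl]
    have := hQ.apply_le_succ_of_rank_eq_succ hp hq hd
    split_ifs with h
    · have := hdes.1 h
      omega
    · have := mt hdes.2 h
      omega

theorem dst_std (hQ : IsQY μ Q) : dst (std Q) (isSYT_std Q) = Q :=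
  ext_of_eqOn fun _ _ hij => by rw [dst_apply _ hij, std_apply _ hij, hQ.desCount_std_rank hij]

theorem exists_left_of_mem_first_row (hQ : IsQY μ Q) {j : ℕ} (hj : (0, j) ∈ μ) (hj0 : 0 < j) :
    ∃ c ∈ μ, Q c.1 c.2 = Q 0 j ∧ c.2 < j := by
  rcases Nat.eq_zero_or_pos (Q 0 j) with h0 | hpos
  · refine ⟨(0, 0), μ.up_left_mem le_rfl (Nat.zero_le j) hj, ?_, hj0⟩
    have : Q 0 0 ≤ Q 0 j := Q.row_weak hj0 hj
    show Q 0 0 = Q 0 j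
    omega
  · obtain ⟨a, b, a', b', hab, hab', hval, hval', hcol⟩ := hQ _ hpos ⟨0, j, hj, rfl⟩
    have hb' : b' < j := lt_of_not_ge fun hjb => by
      have := Q.row_weak_of_le hjb (μ.up_left_mem (Nat.zero_le a') le_rfl hab')
      have := Q.col_weak (Nat.zero_le a') hab'
      omega
    exact ⟨(a, b), hab, hval, hcol.trans_lt hb'⟩

/-- The leftmost cells of the values `0, …, maxEntry Q` and the first-row cells off the first
column are disjoint sets of cells, since a value met in the first row also occurs further left. -/
theorem maxEntry_add_rowLen_le (hQ : IsQY μ Q) (hμ : 0 < μ.card) :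
    maxEntry Q + μ.rowLen 0 ≤ μ.card := by
  classical
  set leftmost := {p ∈ μ.cells | ∀ c ∈ μ.cells, Q c.1 c.2 = Q p.1 p.2 → p.2 ≤ c.2}
  set firstRow := (Ioo 0 (μ.rowLen 0)).image (Prod.mk 0)
  have hleft : maxEntry Q + 1 ≤ #leftmost := by
    refine (card_range _).symm.le.trans
      (card_le_card_of_surjOn (fun p => Q p.1 p.2) fun v hv => ?_)
    obtain ⟨p, hp, hpv⟩ := exists_apply_eq_maxEntry Q hμ
    obtain ⟨c, hc, hcv⟩ :=
      hQ.exists_apply_eq_of_le (Nat.lt_succ_iff.1 (mem_range.1 hv)) ⟨p, hp, hpv⟩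
    obtain ⟨l, hl, hlmin⟩ := exists_min_image {c ∈ μ.cells | Q c.1 c.2 = v} Prod.snd
      ⟨c, mem_filter.2 ⟨(μ.mem_cells _).2 hc, hcv⟩⟩
    obtain ⟨hlμ, hlv⟩ := mem_filter.1 hl
    refine ⟨l, mem_filter.2 ⟨hlμ, fun c hc hcl => ?_⟩, hlv⟩
    exact hlmin c (mem_filter.2 ⟨hc, hcl.trans hlv⟩)
  have hfirst : #firstRow = μ.rowLen 0 - 1 := by
    rw [card_image_of_injective _ (Prod.mk_right_injective 0), Nat.card_Ioo, Nat.sub_zero]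
  have hdisj : Disjoint leftmost firstRow := disjoint_left.2 fun p hp hp' => by
    obtain ⟨j, hj, rfl⟩ := mem_image.1 hp'
    obtain ⟨hj0, hjlen⟩ := mem_Ioo.1 hj
    obtain ⟨c, hc, hcv, hcj⟩ :=
      hQ.exists_left_of_mem_first_row (μ.mem_iff_lt_rowLen.2 hjlen) hj0
    exact hcj.not_ge ((mem_filter.1 hp).2 c ((μ.mem_cells _).2 hc) hcv)
  have hsub : leftmost ∪ firstRow ⊆ μ.cells := union_subset (filter_subset _ _) <|
    image_subset_iff.2 fun j hj => (μ.mem_cells _).2 (μ.mem_iff_lt_rowLen.2 (mem_Ioo.1 hj).2)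
  have hcard := card_le_card hsub
  rw [card_union_of_disjoint hdisj, hfirst] at hcard
  have : 0 < μ.rowLen 0 := μ.mem_iff_lt_rowLen.1 (μ.zero_zero_mem_of_card_pos hμ)
  exact (by omega : maxEntry Q + μ.rowLen 0 ≤ #μ.cells)

theorem existsUnique_maxEq (hQ : IsQY μ Q) (hμ : 0 < μ.card) :
    ∃! m, m ∈ Icc (μ.colLen 0) (μ.card - (μ.rowLen 0 - 1)) ∧ MaxEq μ Q m := by
  refine ⟨maxEntry Q + 1, ⟨mem_Icc.2 ⟨colLen_zero_le_maxEntry_succ Q hμ, ?_⟩,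
    (maxEq_iff Q hμ).2 rfl⟩, fun m hm => (maxEq_iff Q hμ).1 hm.2⟩
  have := hQ.maxEntry_add_rowLen_le hμ
  have := μ.mem_iff_lt_rowLen.1 (μ.zero_zero_mem_of_card_pos hμ)
  omega

end IsQY

theorem EntryLE.mono {μ : YoungDiagram} {T : SemistandardYoungTableau μ} {m m' : ℕ}
    (h : EntryLE μ T m) (hm : m ≤ m') : EntryLE μ T m' :=
  fun i j hij => (h i j hij).trans_le hm

theorem Nat.card_eq_sum_card_of_existsUnique {α : Type*} {P : α → Prop} {R : ℕ → α → Prop}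
    (s : Finset ℕ) [∀ m, Finite {a // R m a}] (hP : ∀ a, P a → ∃! m, m ∈ s ∧ R m a)
    (hR : ∀ m ∈ s, ∀ a, R m a → P a) :
    Nat.card {a // P a} = ∑ m ∈ s, Nat.card {a // R m a} := by
  let e : {a // P a} ≃ Σ m : s, {a // R m a} :=
    { toFun a := ⟨⟨_, (hP a.1 a.2).exists.choose_spec.1⟩, a.1,
        (hP a.1 a.2).exists.choose_spec.2⟩
      invFun x := ⟨x.2.1, hR x.1 x.1.2 x.2.1 x.2.2⟩
      left_inv _ := rfl
      right_inv := fun ⟨⟨m, hm⟩, a, ha⟩ => Sigma.subtype_ext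
        (Subtype.ext ((hP a (hR m hm a ha)).unique
          (hP a (hR m hm a ha)).exists.choose_spec ⟨hm, ha⟩)) rfl }
  rw [Nat.card_congr e, Nat.card_sigma, sum_coe_sort s fun m => Nat.card {a // R m a}]

open SemistandardYoungTableau in
noncomputable def sytEquivQY (μ : YoungDiagram) :
    {T : SemistandardYoungTableau μ // IsSYT μ T} ≃
      {Q : SemistandardYoungTableau μ // IsQY μ Q ∧ EntryLE μ Q μ.card} where
  toFun T := ⟨dst T.1 T.2, isQY_dst T.2, entryLE_dst T.2⟩
  invFun Q := ⟨std Q.1, isSYT_std Q.1⟩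
  left_inv T := Subtype.ext (std_dst T.2)
  right_inv Q := Subtype.ext Q.2.1.dst_std

instance finite_isQY_maxEq (μ : YoungDiagram) (m : ℕ) :
    Finite {Q : SemistandardYoungTableau μ // IsQY μ Q ∧ MaxEq μ Q m} :=
  have := SemistandardYoungTableau.finite_entryLE (μ := μ) m
  Finite.of_injective (fun Q => (⟨Q.1, Q.2.2.1⟩ : {Q // EntryLE μ Q m}))
    fun _ _ h => Subtype.ext (Subtype.mk.inj h)

/-- every quasi-Yamanouchi tableau in `QYT_{≤n}(λ)` is its own
destandardization; the sets `QYT_{=m}(λ)` for `ℓ(λ) ≤ m ≤ n - (λ₁ - 1)` partition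
`QYT_{≤n}(λ)`; and consequently `SYT(λ) = Σ_m QYT_{=m}(λ)`. -/
theorem qyt_partition_syt (μ : YoungDiagram) (hμ : 0 < μ.card) :
    (∀ Q : SemistandardYoungTableau μ, IsQY μ Q → EntryLE μ Q μ.card → IsDst μ Q Q) ∧
    (∀ Q : SemistandardYoungTableau μ, IsQY μ Q → EntryLE μ Q μ.card →
      ∃! m : ℕ, m ∈ Finset.Icc (μ.colLen 0) (μ.card - (μ.rowLen 0 - 1)) ∧
        MaxEq μ Q m) ∧
    SYTcount μ = ∑ m ∈ Finset.Icc (μ.colLen 0) (μ.card - (μ.rowLen 0 - 1)), QYTeq μ m := by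
  refine ⟨fun Q hQ _ => ⟨.refl, hQ.not_step⟩, fun Q hQ _ => hQ.existsUnique_maxEq hμ, ?_⟩
  rw [SYTcount, Nat.card_congr (sytEquivQY μ)]
  exact Nat.card_eq_sum_card_of_existsUnique _ (fun Q hQ => by
    simpa only [hQ.1, true_and] using hQ.1.existsUnique_maxEq hμ)
    fun m hm Q hQ => ⟨hQ.1, hQ.2.1.mono ((mem_Icc.1 hm).2.trans (Nat.sub_le _ _))⟩
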